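/- For every graph H with at least one edge and for every 0 < ε < 1 there is a positive constant c = c(H, ε) such that if p ≤ c·n^{-1/d*(H)}, then the probability that G_{n,p} contains an H-tiling covering at least εn vertices tends to 0 as n → ∞. -/

import Mathlib

open MeasureTheory Filter

noncomputable def bernoulliMeasure (p : ℝ) : Measure Bool :=
  (PMF.bernoulli (min (Real.toNNReal p) 1) (min_le_right _ _)).toMeasure

noncomputable def erMeasure (n : ℕ) (p : ℝ) : Measure (Sym2 (Fin n) → Bool) :=
  Measure.pi fun _ => bernoulliMeasure p

/-- The random graph on `Fin n` determined by the edge-indicator function `ω`. -/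
def graphOfFn {n : ℕ} (ω : Sym2 (Fin n) → Bool) : SimpleGraph (Fin n) where
  Adj u v := u ≠ v ∧ ω s(u, v) = true
  symm := ⟨fun u v h => ⟨h.1.symm, by rw [Sym2.eq_swap]; exact h.2⟩⟩
  loopless := ⟨fun u h => h.1 rfl⟩

/-- `f` is a copy of `H` in `G` (not necessarily induced). -/
def IsCopyEmb {α β : Type*} (H : SimpleGraph α) (G : SimpleGraph β) (f : α ↪ β) : Prop :=
  ∀ ⦃u v : α⦄, H.Adj u v → G.Adj (f u) (f v)

/-- `F` is an `H`-tiling in `G`: vertex-disjoint copies of `H` in `G`. -/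
def IsHTiling {α β : Type*} (H : SimpleGraph α) (G : SimpleGraph β) (F : Set (α ↪ β)) : Prop :=
  (∀ f ∈ F, IsCopyEmb H G f) ∧
    ∀ f ∈ F, ∀ g ∈ F, f ≠ g → Disjoint (Set.range (⇑f)) (Set.range (⇑g))

/-- The set of vertices covered by the tiling `F`. -/
def tilingCover {α β : Type*} (F : Set (α ↪ β)) : Set β := ⋃ f ∈ F, Set.range (⇑f)

/-- `G` contains a perfect `H`-tiling. -/
def HasPerfectHTiling {α β : Type*} (H : SimpleGraph α) (G : SimpleGraph β) : Prop :=
  ∃ F : Set (α ↪ β), IsHTiling H G F ∧ tilingCover F = Set.univ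

/-- `d(H') = e(H')/(|H'| - 1)` for a subgraph `H'`. -/
noncomputable def dRatio {V : Type*} {H : SimpleGraph V} (H' : H.Subgraph) : ℝ :=
  (H'.edgeSet.ncard : ℝ) / ((H'.verts.ncard : ℝ) - 1)

/-- `d*(H) = max{d(H') : H' ⊆ H, |H'| ≥ 2}`. -/
noncomputable def dStar {V : Type*} (H : SimpleGraph V) : ℝ :=
  sSup {x : ℝ | ∃ H' : H.Subgraph, 2 ≤ H'.verts.ncard ∧ x = dRatio H'}

noncomputable def pairDensity {V : Type*} (G : SimpleGraph V) (A B : Set V) : ℝ :=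
  (({p : V × V | p.1 ∈ A ∧ p.2 ∈ B ∧ G.Adj p.1 p.2}).ncard : ℝ) /
    ((A.ncard : ℝ) * (B.ncard : ℝ))

/-- `(A, B)` is an `ε`-regular pair in `G`. -/
def IsRegularPair {V : Type*} (G : SimpleGraph V) (A B : Set V) (ε : ℝ) : Prop :=
  ∀ X ⊆ A, ∀ Y ⊆ B, ε * A.ncard ≤ (X.ncard : ℝ) → ε * B.ncard ≤ (Y.ncard : ℝ) →
    |pairDensity G A B - pairDensity G X Y| < ε

/-- `(A, B)` is an `(ε, d)`-super-regular pair in `G`. -/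
def IsSuperRegularPair {V : Type*} (G : SimpleGraph V) (A B : Set V) (ε d : ℝ) : Prop :=
  (∀ X ⊆ A, ∀ Y ⊆ B, ε * A.ncard ≤ (X.ncard : ℝ) → ε * B.ncard ≤ (Y.ncard : ℝ) →
      d < pairDensity G X Y) ∧
    (∀ a ∈ A, d * B.ncard < ((G.neighborSet a ∩ B).ncard : ℝ)) ∧
    (∀ b ∈ B, d * A.ncard < ((G.neighborSet b ∩ A).ncard : ℝ))

/-!
Let `H' ⊆ H` attain `d*(H)`, with `v` vertices and `e = d*(H) (v - 1)` edges. A tiling covering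
`εn` vertices has at least `m = ⌈εn/h⌉` tiles; restricted to `H'` they are `m` vertex-disjoint
copies of `H'` using `m e` distinct edges. A union bound over the at most `C(n^v, m)` candidate
families bounds the probability by
`C(n^v, m) (c n^{-1/d*})^{m e} ≤ n^{m v} c^{m e} n^{-m (v - 1)} / m! ≤ (c n)^m / m!`,
and `(c n)^m / m! ≤ (exp 1 · c n / m)^m`, which is at most `2^{-m}` once `c` is small
compared with `ε / h`.
-/

open scoped ENNReal

instance (p : ℝ) : IsProbabilityMeasure (bernoulliMeasure p) := by
  unfold bernoulliMeasure; infer_instance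

lemma bernoulliMeasure_singleton_true (p : ℝ) :
    bernoulliMeasure p {true} = min (ENNReal.ofReal p) 1 := by
  rw [bernoulliMeasure, PMF.toMeasure_apply_singleton _ _ (measurableSet_singleton _)]
  change ((min p.toNNReal 1 : NNReal) : ℝ≥0∞) = _
  simp [ENNReal.ofReal]

lemma erMeasure_forall_true (n : ℕ) (p : ℝ) (T : Finset (Sym2 (Fin n))) :
    erMeasure n p {ω | ∀ t ∈ T, ω t = true} = min (ENNReal.ofReal p) 1 ^ T.card := by
  have hpi : {ω : Sym2 (Fin n) → Bool | ∀ t ∈ T, ω t = true} =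
      (T : Set (Sym2 (Fin n))).pi fun _ => {true} := by
    ext ω; simp
  simp [hpi, erMeasure, bernoulliMeasure_singleton_true]

def HasDisjointCopies {W β : Type*} (K : SimpleGraph W) (m : ℕ) (G : SimpleGraph β) : Prop :=
  ∃ S : Finset (W ↪ β), S.card = m ∧ (∀ ψ ∈ S, IsCopyEmb K G ψ) ∧
    (S : Set (W ↪ β)).PairwiseDisjoint (Set.range ⇑·)

lemma card_embedding_le_pow {W β : Type*} [Finite W] [Finite β] :
    Nat.card (W ↪ β) ≤ Nat.card β ^ Nat.card W :=
  Nat.card_fun (α := W) (β := β) ▸ Nat.card_le_card_of_injective _ DFunLike.coe_injective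

section Copies

variable {W : Type*} [Finite W] (K : SimpleGraph W) {n : ℕ}

noncomputable def copyEdges (ψ : W ↪ Fin n) : Finset (Sym2 (Fin n)) :=
  K.edgeSet.toFinite.toFinset.map ψ.sym2Map

lemma card_copyEdges (ψ : W ↪ Fin n) : (copyEdges K ψ).card = K.edgeSet.ncard := by
  rw [copyEdges, Finset.card_map, Set.ncard_eq_toFinset_card]

lemma disjoint_copyEdges {ψ φ : W ↪ Fin n} (h : Disjoint (Set.range ψ) (Set.range φ)) :
    Disjoint (copyEdges K ψ) (copyEdges K φ) := by
  simp only [copyEdges, Finset.disjoint_left, Finset.mem_map, Set.Finite.mem_toFinset,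
    Function.Embedding.sym2Map_apply, not_exists, not_and]
  rintro _ ⟨e, -, rfl⟩ e' -
  induction e with | _ a b => induction e' with | _ a' b' =>
  simp only [Sym2.map_mk, Sym2.eq_iff]
  rintro (⟨h1, -⟩ | ⟨h1, -⟩) <;>
    exact Set.disjoint_left.1 h ⟨_, rfl⟩ ⟨a', h1⟩

lemma IsCopyEmb.forall_copyEdges {ω : Sym2 (Fin n) → Bool} {ψ : W ↪ Fin n}
    (hψ : IsCopyEmb K (graphOfFn ω) ψ) : ∀ t ∈ copyEdges K ψ, ω t = true := by
  simp only [copyEdges, Finset.mem_map, Set.Finite.mem_toFinset,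
    Function.Embedding.sym2Map_apply]
  rintro _ ⟨e, he, rfl⟩
  induction e with | _ a b => exact (hψ he).2

lemma erMeasure_exists_disjoint_copies_le (p : ℝ) (m : ℕ) :
    erMeasure n p {ω | HasDisjointCopies K m (graphOfFn ω)} ≤
      (n ^ Nat.card W).choose m * min (ENNReal.ofReal p) 1 ^ (m * K.edgeSet.ncard) := by
  classical
  have := Fintype.ofFinite W
  set 𝒮 := (Finset.univ.powersetCard m).filter
    fun S : Finset (W ↪ Fin n) => (S : Set (W ↪ Fin n)).PairwiseDisjoint (Set.range ⇑·)
  have hcover : {ω | HasDisjointCopies K m (graphOfFn ω)} ⊆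
      ⋃ S ∈ 𝒮, {ω | ∀ t ∈ S.biUnion (copyEdges K), ω t = true} := by
    rintro ω ⟨S, hcard, hcopy, hdisj⟩
    refine Set.mem_biUnion (x := S) (by simp [𝒮, hcard, hdisj]) ?_
    simp only [Set.mem_ofPred_eq, Finset.mem_biUnion, forall_exists_index, and_imp]
    exact fun t ψ hψ ht => (hcopy ψ hψ).forall_copyEdges K t ht
  have hcyl : ∀ S ∈ 𝒮, erMeasure n p {ω | ∀ t ∈ S.biUnion (copyEdges K), ω t = true} =
      min (ENNReal.ofReal p) 1 ^ (m * K.edgeSet.ncard) := by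
    intro S hS
    simp only [𝒮, Finset.mem_filter, Finset.mem_powersetCard_univ] at hS
    rw [erMeasure_forall_true, Finset.card_biUnion
      fun ψ hψ φ hφ hne => disjoint_copyEdges K (hS.2 hψ hφ hne)]
    simp [card_copyEdges, hS.1]
  have hcard𝒮 : 𝒮.card ≤ (n ^ Nat.card W).choose m := by
    calc 𝒮.card ≤ (Finset.univ.powersetCard m : Finset (Finset (W ↪ Fin n))).card :=
          Finset.card_filter_le _ _
      _ = (Nat.card (W ↪ Fin n)).choose m := by
          rw [Finset.card_powersetCard, Finset.card_univ, Nat.card_eq_fintype_card]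
      _ ≤ (n ^ Nat.card W).choose m :=
          Nat.choose_le_choose _ (by simpa using card_embedding_le_pow (W := W) (β := Fin n))
  calc _ ≤ erMeasure n p
          (⋃ S ∈ 𝒮, {ω | ∀ t ∈ S.biUnion (copyEdges K), ω t = true}) :=
        measure_mono hcover
    _ ≤ ∑ S ∈ 𝒮, erMeasure n p {ω | ∀ t ∈ S.biUnion (copyEdges K), ω t = true} :=
        measure_biUnion_finset_le _ _
    _ = 𝒮.card * min (ENNReal.ofReal p) 1 ^ (m * K.edgeSet.ncard) := by
        rw [Finset.sum_congr rfl hcyl, Finset.sum_const, nsmul_eq_mul]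
    _ ≤ _ := by gcongr

end Copies

section Tiling
variable {α β : Type*} {H : SimpleGraph α} {G : SimpleGraph β} {F : Set (α ↪ β)}

lemma ncard_tilingCover_le (hF : F.Finite) : (tilingCover F).ncard ≤ Nat.card α * F.ncard := by
  lift F to Finset (α ↪ β) using hF
  calc (tilingCover (F : Set (α ↪ β))).ncard ≤ ∑ f ∈ F, (Set.range f).ncard :=
        F.set_ncard_biUnion_le _
    _ = Nat.card α * (F : Set (α ↪ β)).ncard := by
        rw [Finset.sum_congr rfl fun f _ => Set.ncard_range_of_injective f.injective,
          Finset.sum_const, smul_eq_mul, Set.ncard_coe_finset, mul_comm]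

lemma IsHTiling.hasDisjointCopies_coe (hT : IsHTiling H G F) (hF : F.Finite) (H' : H.Subgraph)
    (hH' : H'.verts.Nonempty) {m : ℕ} (hm : m ≤ F.ncard) : HasDisjointCopies H'.coe m G := by
  obtain ⟨S₀, hS₀F, hS₀card⟩ := Set.exists_subset_card_eq hm
  let ρ : (α ↪ β) → (H'.verts ↪ β) := fun f => (Function.Embedding.subtype _).trans f
  have hrange : ∀ f, Set.range (ρ f) ⊆ Set.range f := by
    rintro f _ ⟨a, rfl⟩
    exact ⟨a, rfl⟩
  obtain ⟨a, ha⟩ := hH'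
  have hinj : Set.InjOn ρ F := by
    intro f hf g hg hfg
    by_contra hne
    refine Set.disjoint_left.1 (hT.2 f hf g hg hne) ⟨a, rfl⟩ ⟨a, ?_⟩
    exact (DFunLike.congr_fun hfg ⟨a, ha⟩).symm
  refine ⟨((hF.subset hS₀F).image ρ).toFinset, ?_, ?_, ?_⟩
  · rw [← Set.ncard_eq_toFinset_card _ ((hF.subset hS₀F).image ρ),
      (hinj.mono hS₀F).ncard_image, hS₀card]
  · simp only [Set.Finite.mem_toFinset, Set.mem_image]
    rintro _ ⟨f, hf, rfl⟩ u v huv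
    exact hT.1 f (hS₀F hf) (H'.adj_sub huv)
  · rw [Set.Finite.coe_toFinset]
    rintro _ ⟨f, hf, rfl⟩ _ ⟨g, hg, rfl⟩ hne
    exact (hT.2 f (hS₀F hf) g (hS₀F hg) fun h => hne (h ▸ rfl)).mono (hrange f) (hrange g)

lemma nat_ceil_div_le_ncard_of_le_ncard_tilingCover {α β : Type*} [Finite α] [Nonempty α]
    {F : Set (α ↪ β)} (hF : F.Finite) {x : ℝ} (hx : x ≤ (tilingCover F).ncard) :
    ⌈x / Nat.card α⌉₊ ≤ F.ncard := by
  refine Nat.ceil_le.2 ((div_le_iff₀ (by exact_mod_cast Nat.card_pos)).2 ?_)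
  calc x ≤ (tilingCover F).ncard := hx
    _ ≤ (Nat.card α * F.ncard : ℕ) := by exact_mod_cast ncard_tilingCover_le hF
    _ = F.ncard * Nat.card α := by push_cast; ring

end Tiling

lemma SimpleGraph.Subgraph.ncard_edgeSet_coe {V : Type*} {G : SimpleGraph V} (G' : G.Subgraph) :
    G'.coe.edgeSet.ncard = G'.edgeSet.ncard := by
  rw [← G'.image_coe_edgeSet_coe, Set.ncard_image_of_injective _
    (Sym2.map.injective Subtype.val_injective)]

lemma erMeasure_exists_tiling_le {α : Type*} [Finite α] {H : SimpleGraph α} (H' : H.Subgraph)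
    (hH' : H'.verts.Nonempty) (n m : ℕ) (p : ℝ) :
    erMeasure n p {ω | ∃ F : Set (α ↪ Fin n), IsHTiling H (graphOfFn ω) F ∧ m ≤ F.ncard}
      ≤
      (n ^ H'.verts.ncard).choose m * min (ENNReal.ofReal p) 1 ^ (m * H'.edgeSet.ncard) := by
  rw [← H'.ncard_edgeSet_coe, ← Nat.card_coe_set_eq]
  refine le_trans (measure_mono ?_) (erMeasure_exists_disjoint_copies_le H'.coe p m)
  rintro ω ⟨F, hT, hm⟩
  exact hT.hasDisjointCopies_coe F.toFinite H' hH' hm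

section DStar
variable {V : Type*} {H : SimpleGraph V}

lemma one_mem_setOf_dRatio (hH : H.edgeSet.Nonempty) :
    (1 : ℝ) ∈ {x : ℝ | ∃ H' : H.Subgraph, 2 ≤ H'.verts.ncard ∧ x = dRatio H'} := by
  obtain ⟨e, he⟩ := hH
  induction e with | _ u v =>
  rw [SimpleGraph.mem_edgeSet] at he
  refine ⟨H.subgraphOfAdj he, ?_, ?_⟩
  · rw [SimpleGraph.subgraphOfAdj_verts, Set.ncard_pair he.ne]
  · rw [dRatio, SimpleGraph.subgraphOfAdj_verts, Set.ncard_pair he.ne,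
      SimpleGraph.edgeSet_subgraphOfAdj, Set.ncard_singleton]
    norm_num

variable [Finite V]

lemma finite_setOf_dRatio :
    {x : ℝ | ∃ H' : H.Subgraph, 2 ≤ H'.verts.ncard ∧ x = dRatio H'}.Finite :=
  (Set.finite_range dRatio).subset fun _ ⟨H', _, hx⟩ => ⟨H', hx.symm⟩

lemma one_le_dStar (hH : H.edgeSet.Nonempty) : 1 ≤ dStar H :=
  le_csSup finite_setOf_dRatio.bddAbove (one_mem_setOf_dRatio hH)

lemma exists_subgraph_ncard_edgeSet_eq_dStar_mul (hH : H.edgeSet.Nonempty) :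
    ∃ H' : H.Subgraph, 2 ≤ H'.verts.ncard ∧
      (H'.edgeSet.ncard : ℝ) = dStar H * (H'.verts.ncard - 1) := by
  obtain ⟨H', hv, hd⟩ :=
    Set.Nonempty.csSup_mem ⟨1, one_mem_setOf_dRatio hH⟩ finite_setOf_dRatio
  refine ⟨H', hv, ?_⟩
  have : (1 : ℝ) < H'.verts.ncard := by exact_mod_cast hv
  rw [dStar, hd, dRatio, div_mul_cancel₀ _ (sub_ne_zero.2 this.ne')]

end DStar

open Nat in
lemma pow_div_factorial_le_exp_one_mul_div_pow {y : ℝ} (hy : 0 ≤ y) (m : ℕ) :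
    y ^ m / m ! ≤ (Real.exp 1 * y / m) ^ m := by
  rcases Nat.eq_zero_or_pos m with rfl | hm
  · simp
  have hmR : (0 : ℝ) < m := by exact_mod_cast hm
  have hfac : (m : ℝ) ^ m / m ! ≤ Real.exp 1 ^ m := by
    simpa [← Real.exp_one_pow] using Real.pow_div_factorial_le_exp (x := m) hmR.le m
  calc y ^ m / m ! = (y / m) ^ m * ((m : ℝ) ^ m / m !) := by
        rw [div_pow]
        field_simp
    _ ≤ (y / m) ^ m * Real.exp 1 ^ m := by gcongr
    _ = (Real.exp 1 * y / m) ^ m := by ring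

lemma pow_mul_rpow_neg_inv_pow {n : ℝ} (hn : 0 < n) {d : ℝ} (hd : d ≠ 0) {v m e : ℕ}
    (he : (e : ℝ) = d * (v - 1)) : n ^ (v * m) * (n ^ (-(1 / d))) ^ (m * e) = n ^ m := by
  rw [← Real.rpow_natCast (n ^ _), ← Real.rpow_mul hn.le, ← Real.rpow_natCast n (v * m),
    ← Real.rpow_add hn, ← Real.rpow_natCast n m]
  congr 1
  push_cast
  rw [he]
  field_simp
  ring

open Nat in
lemma choose_mul_pow_le {n v m e : ℕ} (hn : 0 < n) {d : ℝ} (hd : d ≠ 0)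
    (he : (e : ℝ) = d * (v - 1)) (he1 : 1 ≤ e) {c : ℝ} (hc0 : 0 ≤ c) (hc1 : c ≤ 1) :
    ((n ^ v).choose m : ℝ) * (c * (n : ℝ) ^ (-(1 / d))) ^ (m * e) ≤
      (Real.exp 1 * c * n / m) ^ m := by
  have hnR : (0 : ℝ) < n := by exact_mod_cast hn
  calc ((n ^ v).choose m : ℝ) * (c * (n : ℝ) ^ (-(1 / d))) ^ (m * e)
      ≤ (n : ℝ) ^ (v * m) / m ! * (c ^ (m * e) * ((n : ℝ) ^ (-(1 / d))) ^ (m * e)) := by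
        rw [mul_pow]
        gcongr
        calc ((n ^ v).choose m : ℝ) ≤ ((n ^ v : ℕ) : ℝ) ^ m / m ! :=
              Nat.choose_le_pow_div m _
          _ = (n : ℝ) ^ (v * m) / m ! := by push_cast; rw [pow_mul]
    _ = c ^ (m * e) * ((n : ℝ) ^ (v * m) * ((n : ℝ) ^ (-(1 / d))) ^ (m * e)) / m ! := by ring
    _ = c ^ (m * e) * n ^ m / m ! := by rw [pow_mul_rpow_neg_inv_pow hnR hd he]
    _ ≤ c ^ m * n ^ m / m ! := by
        gcongr ?_ * _ / _
        exact pow_le_pow_of_le_one hc0 hc1 (Nat.le_mul_of_pos_right m he1)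
    _ = (c * n) ^ m / m ! := by rw [mul_pow]
    _ ≤ (Real.exp 1 * c * n / m) ^ m := by
        rw [mul_assoc]
        exact pow_div_factorial_le_exp_one_mul_div_pow (by positivity) m

lemma erMeasure_exists_tiling_le_ofReal {α : Type*} [Finite α] {H : SimpleGraph α}
    (H' : H.Subgraph) (hv : 2 ≤ H'.verts.ncard) {d : ℝ} (hd : 1 ≤ d)
    (he : (H'.edgeSet.ncard : ℝ) = d * (H'.verts.ncard - 1))
    {c : ℝ} (hc0 : 0 ≤ c) (hc1 : c ≤ 1) {n : ℕ} (hn : 0 < n) {p : ℝ}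
    (hp : p ≤ c * (n : ℝ) ^ (-(1 / d))) (m : ℕ) :
    erMeasure n p {ω | ∃ F : Set (α ↪ Fin n), IsHTiling H (graphOfFn ω) F ∧ m ≤ F.ncard}
      ≤
      ENNReal.ofReal ((Real.exp 1 * c * n / m) ^ m) := by
  have hH' : H'.verts.Nonempty := Set.nonempty_of_ncard_ne_zero (by omega)
  have he1 : 1 ≤ H'.edgeSet.ncard := by
    have : (2 : ℝ) ≤ H'.verts.ncard := by exact_mod_cast hv
    exact_mod_cast (show (1 : ℝ) ≤ H'.edgeSet.ncard by rw [he]; nlinarith)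
  calc _ ≤ (n ^ H'.verts.ncard).choose m * min (ENNReal.ofReal p) 1 ^ (m * H'.edgeSet.ncard) :=
        erMeasure_exists_tiling_le H' hH' n m p
    _ ≤ (n ^ H'.verts.ncard).choose m *
          ENNReal.ofReal (c * (n : ℝ) ^ (-(1 / d))) ^ (m * H'.edgeSet.ncard) := by
        gcongr
        exact (min_le_left _ _).trans (ENNReal.ofReal_le_ofReal hp)
    _ = ENNReal.ofReal ((n ^ H'.verts.ncard).choose m *
          (c * (n : ℝ) ^ (-(1 / d))) ^ (m * H'.edgeSet.ncard)) := by
        rw [ENNReal.ofReal_mul (Nat.cast_nonneg _), ENNReal.ofReal_natCast,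
          ENNReal.ofReal_pow (by positivity)]
    _ ≤ _ := ENNReal.ofReal_le_ofReal (choose_mul_pow_le hn (by positivity) he he1 hc0 hc1)

lemma exp_one_mul_div_nat_ceil_le_half {ε k c x : ℝ} (hε : 0 < ε) (hk : 0 < k)
    (hc0 : 0 ≤ c) (hc : c ≤ ε / (6 * k)) (hx : 0 < x) :
    Real.exp 1 * c * x / ⌈ε * x / k⌉₊ ≤ 1 / 2 := by
  have hceil : ε * x / k ≤ ⌈ε * x / k⌉₊ := Nat.le_ceil _
  have hexp : Real.exp 1 ≤ 3 := (Real.exp_one_lt_d9.trans (by norm_num)).le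
  rw [div_le_iff₀ ((by positivity : 0 < ε * x / k).trans_le hceil)]
  calc Real.exp 1 * c * x ≤ 3 * (ε / (6 * k)) * x := by gcongr
    _ = ε * x / k / 2 := by field_simp; ring
    _ ≤ 1 / 2 * ⌈ε * x / k⌉₊ := by linarith

theorem statement5_general (h : ℕ) (H : SimpleGraph (Fin h)) (hH : H.edgeSet.Nonempty)
    (ε : ℝ) (hε0 : 0 < ε) :
    ∃ c : ℝ, 0 < c ∧
      ∀ p : ℕ → ℝ, (∀ n : ℕ, p n ≤ c * (n : ℝ) ^ (-(1 / dStar H))) →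
        Tendsto
          (fun n : ℕ =>
            erMeasure n (p n)
              {ω | ∃ F : Set (Fin h ↪ Fin n),
                IsHTiling H (graphOfFn ω) F ∧ ε * n ≤ ((tilingCover F).ncard : ℝ)})
          atTop (nhds 0) := by
  obtain ⟨H', hv, he⟩ := exists_subgraph_ncard_edgeSet_eq_dStar_mul hH
  have : Nonempty (Fin h) :=
    ⟨(Set.nonempty_of_ncard_ne_zero (by omega : H'.verts.ncard ≠ 0)).some⟩
  have hhR : (0 : ℝ) < h := by exact_mod_cast Fin.pos_iff_nonempty.2 this
  set c := min 1 (ε / (6 * h))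
  refine ⟨c, by positivity, fun p hp => ?_⟩
  set m : ℕ → ℕ := fun n => ⌈ε * n / h⌉₊
  have hm : Tendsto m atTop atTop := tendsto_nat_ceil_atTop.comp
    ((tendsto_natCast_atTop_atTop.const_mul_atTop hε0).atTop_div_const hhR)
  refine tendsto_of_tendsto_of_tendsto_of_le_of_le' tendsto_const_nhds
    (h := fun n => ENNReal.ofReal ((1 / 2) ^ m n)) ?_
    (Eventually.of_forall fun _ => zero_le) ((eventually_gt_atTop 0).mono fun n hn => ?_)
  · rw [← ENNReal.ofReal_zero]
    exact (ENNReal.continuous_ofReal.tendsto 0).comp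
      ((tendsto_pow_atTop_nhds_zero_of_lt_one (by norm_num) (by norm_num)).comp hm)
  calc _ ≤ erMeasure n (p n)
        {ω | ∃ F : Set (Fin h ↪ Fin n), IsHTiling H (graphOfFn ω) F ∧ m n ≤ F.ncard} :=
        measure_mono <| by
          rintro ω ⟨F, hT, hcov⟩
          exact ⟨F, hT, by simpa only [Nat.card_fin] using
            nat_ceil_div_le_ncard_of_le_ncard_tilingCover F.toFinite hcov⟩
    _ ≤ ENNReal.ofReal ((Real.exp 1 * c * n / m n) ^ m n) :=
        erMeasure_exists_tiling_le_ofReal H' hv (one_le_dStar hH) he (by positivity)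
          (min_le_left _ _) hn (hp n) (m n)
    _ ≤ _ := ENNReal.ofReal_le_ofReal <| pow_le_pow_left₀ (by positivity)
        (exp_one_mul_div_nat_ceil_le_half hε0 hhR (by positivity) (min_le_right _ _)
          (by positivity)) _

/-- Theorem 5, part of Theorem 4.9 in [JŁR]: for every `H` with at least
one edge and every `0 < ε < 1` there is `c = c(H, ε) > 0` such that if `p ≤ c n^{-1/d*(H)}`
then the probability that `G_{n,p}` contains an `H`-tiling covering at least `εn` vertices
tends to `0`. -/
theorem statement5 (h : ℕ) (H : SimpleGraph (Fin h)) (hH : H.edgeSet.Nonempty)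
    (ε : ℝ) (hε0 : 0 < ε) (hε1 : ε < 1) :
    ∃ c : ℝ, 0 < c ∧
      ∀ p : ℕ → ℝ, (∀ n : ℕ, p n ≤ c * (n : ℝ) ^ (-(1 / dStar H))) →
        Tendsto
          (fun n : ℕ =>
            erMeasure n (p n)
              {ω | ∃ F : Set (Fin h ↪ Fin n),
                IsHTiling H (graphOfFn ω) F ∧ ε * n ≤ ((tilingCover F).ncard : ℝ)})
          atTop (nhds 0) :=
  statement5_general h H hH ε hε0
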